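/- Assume every sort has at least two generators. Let S_0I be the set of sorts with no infinite trees and S_1I ⊆ S the set of sorts having exactly one infinite tree. Define f : P(S \ S_0I) → P(S \ S_0I) by f(X) = { s ∈ X | there is a unary generator g : s₁ → s in F_s with s₁ ∈ X such that every other generator g' : s₁' × ⋯ × sₙ' → s of s satisfies sᵢ' ∈ S_0I for all i }. Then f is monotone, S_1I is the greatest fixed point of f, and S_1I = ⋂_{d ∈ ℕ} f^{d+1}(S \ S_0I). Moreover, for each s ∈ S_1I, the unique infinite tree u_s of sort s satisfies u_s = g_s(u_{s₁}), where g_s : s₁ → s is the unique unary generator of s with s₁ ∈ S_1I. -/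

import Mathlib

set_option linter.unusedVariables false


/-- A many-sorted signature: sorts and generators (function symbols),
each generator `g` having argument sorts `src g` and target sort `tgt g`. -/
structure Sig where
  Srt : Type
  Gen : Type
  tgt : Gen → Srt
  src : Gen → List Srt

namespace Sig

variable (σ : Sig)

/-- The generators of a sort `s`. -/
def Gens (s : σ.Srt) : Set σ.Gen := { g | σ.tgt g = s }

/-- A labeling of positions (lists of natural numbers) by generators is a valid
tree labeling if children exist exactly according to arity and have the right sorts. -/
def IsLabeling (L : List ℕ → Option σ.Gen) : Prop :=
  (∀ p, L p = none → ∀ i, L (p ++ [i]) = none) ∧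
  (∀ p g, L p = some g → ∀ i, ((L (p ++ [i])).isSome ↔ i < (σ.src g).length)) ∧
  (∀ p g i g', L p = some g → L (p ++ [i]) = some g' →
      (σ.src g)[i]? = some (σ.tgt g'))

/-- A (possibly infinite) tree of sort `s`. -/
structure Tree (s : σ.Srt) where
  L : List ℕ → Option σ.Gen
  isLab : σ.IsLabeling L
  root : ∃ g, L [] = some g ∧ σ.tgt g = s

variable {σ}

/-- A tree is finite if it has finitely many nodes. -/
def Tree.IsFinite {s : σ.Srt} (t : σ.Tree s) : Prop :=
  { p : List ℕ | (t.L p).isSome }.Finite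

/-- The tree has depth at most `d`. -/
def Tree.DepthLE {s : σ.Srt} (t : σ.Tree s) (d : ℕ) : Prop :=
  ∀ p, (t.L p).isSome → p.length ≤ d

variable (σ)

/-- Build a tree with root labeled `g` from given immediate subtrees. -/
def build (g : σ.Gen) (c : ∀ i : Fin (σ.src g).length, σ.Tree ((σ.src g).get i)) :
    σ.Tree (σ.tgt g) where
  L := fun p =>
    match p with
    | [] => some g
    | i :: q => if h : i < (σ.src g).length then (c ⟨i, h⟩).L q else none
  isLab := by
    refine ⟨?_, ?_, ?_⟩
    · intro p hp i
      match p with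
      | [] => simp at hp
      | j :: q =>
        simp only [List.cons_append]
        by_cases h : j < (σ.src g).length
        · simp only [dif_pos h] at hp ⊢
          exact (c ⟨j, h⟩).isLab.1 q hp i
        · simp only [dif_neg h]
    · intro p g' hp i
      match p with
      | [] =>
        injection hp with hg
        subst hg
        by_cases h : i < (σ.src g).length
        · simp only [List.nil_append, dif_pos h]
          obtain ⟨g₀, h₀, -⟩ := (c ⟨i, h⟩).root
          simp [h₀, h]
        · simp [List.nil_append, dif_neg h, h]
      | j :: q =>
        by_cases h : j < (σ.src g).length
        · simp only [dif_pos h] at hp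
          simp only [List.cons_append, dif_pos h]
          exact (c ⟨j, h⟩).isLab.2.1 q g' hp i
        · simp only [dif_neg h] at hp
          cases hp
    · intro p g' i g'' hp hpi
      match p with
      | [] =>
        injection hp with hg
        subst hg
        by_cases h : i < (σ.src g).length
        · simp only [List.nil_append, dif_pos h] at hpi
          obtain ⟨g₀, h₀, htgt⟩ := (c ⟨i, h⟩).root
          rw [h₀, Option.some.injEq] at hpi
          subst hpi
          rw [List.getElem?_eq_getElem h]
          exact congrArg some htgt.symm
        · simp only [List.nil_append, dif_neg h] at hpi
          cases hpi
      | j :: q =>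
        by_cases h : j < (σ.src g).length
        · simp only [dif_pos h] at hp
          simp only [List.cons_append, dif_pos h] at hpi
          exact (c ⟨j, h⟩).isLab.2.2 q g' i g'' hp hpi
        · simp only [dif_neg h] at hp
          cases hp
  root := ⟨g, rfl, rfl⟩

/-- Sorts with no infinite trees. -/
def S0I : Set σ.Srt := { s | ∀ t : σ.Tree s, t.IsFinite }
/-- Sorts with no finite trees. -/
def S0F : Set σ.Srt := { s | ∀ t : σ.Tree s, ¬ t.IsFinite }
/-- Sorts with only finitely many finite trees. -/
def SFF : Set σ.Srt := { s | { t : σ.Tree s | t.IsFinite }.Finite }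
/-- Sorts with only finitely many infinite trees. -/
def SFI : Set σ.Srt := { s | { t : σ.Tree s | ¬ t.IsFinite }.Finite }
/-- Sorts with exactly one infinite tree. -/
def S1I : Set σ.Srt := { s | ∃! t : σ.Tree s, ¬ t.IsFinite }

/-- Terms of the (extended) first-order language of trees. Variables are
pairs of a sort and a number. -/
inductive Tm : σ.Srt → Type
  | var (s : σ.Srt) (n : ℕ) : Tm s
  | app (g : σ.Gen) (args : ∀ i : Fin (σ.src g).length, Tm ((σ.src g).get i)) :
      Tm (σ.tgt g)

/-- Valuations assign trees to (sorted) variables. -/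
def Val := ∀ s : σ.Srt, ℕ → σ.Tree s

variable {σ}

/-- Evaluation of a term in the structure of trees under a valuation. -/
def Tm.eval (ρ : σ.Val) : ∀ {s : σ.Srt}, σ.Tm s → σ.Tree s
  | _, .var s n => ρ s n
  | _, .app g args => σ.build g (fun i => (args i).eval ρ)

/-- The (sorted) free variables of a term. -/
def Tm.fv : ∀ {s : σ.Srt}, σ.Tm s → Set ((s : σ.Srt) × ℕ)
  | _, .var s n => {⟨s, n⟩}
  | _, .app _ args => ⋃ i, (args i).fv

/-- A term is flat if it is a variable or a generator applied to variables. -/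
def Tm.IsFlat : ∀ {s : σ.Srt}, σ.Tm s → Prop
  | _, .var _ _ => True
  | _, .app g args => ∀ i : Fin (σ.src g).length, ∃ n, args i = Tm.var ((σ.src g).get i) n

/-- A term of the form `f(z̄)`. -/
def Tm.IsApp : ∀ {s : σ.Srt}, σ.Tm s → Prop
  | _, .var _ _ => False
  | _, .app _ _ => True

open Classical in
/-- Update a valuation at one sorted variable. -/
noncomputable def updV (ρ : σ.Val) (s : σ.Srt) (n : ℕ) (t : σ.Tree s) : σ.Val :=
  fun s' m =>
    if h : s' = s then
      (if m = n then cast (congrArg σ.Tree h.symm) t else ρ s' m)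
    else ρ s' m

variable (σ)

/-- Formulae of the extended first-order language of trees: equality,
the finiteness predicates `fin`, propositional connectives and sorted quantifiers. -/
inductive Fml : Type
  | tru : Fml
  | fls : Fml
  | eq {s : σ.Srt} (a b : σ.Tm s) : Fml
  | fin {s : σ.Srt} (a : σ.Tm s) : Fml
  | not (φ : Fml) : Fml
  | and (φ ψ : Fml) : Fml
  | or (φ ψ : Fml) : Fml
  | imp (φ ψ : Fml) : Fml
  | ex (s : σ.Srt) (n : ℕ) (φ : Fml) : Fml
  | all (s : σ.Srt) (n : ℕ) (φ : Fml) : Fml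

variable {σ}

/-- Satisfaction of a formula in the structure `𝒯` of trees under a valuation. -/
def Fml.Sat (ρ : σ.Val) : σ.Fml → Prop
  | .tru => True
  | .fls => False
  | .eq a b => a.eval ρ = b.eval ρ
  | .fin a => (a.eval ρ).IsFinite
  | .not φ => ¬ φ.Sat ρ
  | .and φ ψ => φ.Sat ρ ∧ ψ.Sat ρ
  | .or φ ψ => φ.Sat ρ ∨ ψ.Sat ρ
  | .imp φ ψ => φ.Sat ρ → ψ.Sat ρ
  | .ex s n φ => ∃ t : σ.Tree s, φ.Sat (updV ρ s n t)
  | .all s n φ => ∀ t : σ.Tree s, φ.Sat (updV ρ s n t)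

/-- The free variables of a formula. -/
def Fml.fv : σ.Fml → Set ((s : σ.Srt) × ℕ)
  | .tru => ∅
  | .fls => ∅
  | .eq a b => a.fv ∪ b.fv
  | .fin a => a.fv
  | .not φ => φ.fv
  | .and φ ψ => φ.fv ∪ ψ.fv
  | .or φ ψ => φ.fv ∪ ψ.fv
  | .imp φ ψ => φ.fv ∪ ψ.fv
  | .ex s n φ => φ.fv \ {⟨s, n⟩}
  | .all s n φ => φ.fv \ {⟨s, n⟩}

/-- Two formulae are equivalent in the extended theory of trees if they are
satisfied by exactly the same valuations. -/
def FmlEquiv (φ ψ : σ.Fml) : Prop := ∀ ρ : σ.Val, φ.Sat ρ ↔ ψ.Sat ρ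

end Sig

/-- The operator `f` of the algorithm computing the sorts with exactly one
infinite tree. -/
def fOne (σ : Sig) (X : Set σ.Srt) : Set σ.Srt :=
  { s | s ∈ X ∧ ∃ g ∈ σ.Gens s, ∃ s₁ : σ.Srt, σ.src g = [s₁] ∧ s₁ ∈ X ∧
      ∀ g' ∈ σ.Gens s, g' ≠ g → ∀ s' ∈ σ.src g', s' ∈ Sig.S0I σ }

/-
In a sort of `S₁I` the unique infinite tree `u` is rooted at a unary generator `g : s₁ → s`: if
another generator of `s`, or a second argument of the root, had an argument sort admitting an
infinite tree, varying that argument (every sort has two generators) would yield a second infinite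
tree. Every infinite tree `t₁` of sort `s₁` gives the infinite tree `g(t₁) = u`, so `s₁ ∈ S₁I` and
`S₁I` is a fixed point of `f`. Conversely, in any `X ⊆ S \ S₀I` with `X ⊆ f(X)` two infinite trees
of the same sort carry the same label at every position, by induction on the position. On subsets
of `S \ S₀I` the unary generator chosen by `f` is unique, so `f` commutes with intersections there
and the intersection of the iterates is itself such an `X`.
-/

namespace Sig

variable {σ : Sig} {s s' s₁ : σ.Srt} {g : σ.Gen}

theorem IsLabeling.eq_none_append {L : List ℕ → Option σ.Gen} (hL : σ.IsLabeling L)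
    {p : List ℕ} (hp : L p = none) (r : List ℕ) : L (p ++ r) = none := by
  induction r using List.reverseRecOn with
  | nil => simpa using hp
  | append_singleton r j ih => rw [← List.append_assoc]; exact hL.1 _ ih j

@[simp] theorem build_L_nil (g : σ.Gen) (c : ∀ i : Fin (σ.src g).length, σ.Tree ((σ.src g).get i)) :
    (σ.build g c).L [] = some g := rfl

theorem build_L_cons (g : σ.Gen) (c : ∀ i : Fin (σ.src g).length, σ.Tree ((σ.src g).get i))
    (i : ℕ) (q : List ℕ) :
    (σ.build g c).L (i :: q) = if h : i < (σ.src g).length then (c ⟨i, h⟩).L q else none := rfl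

theorem get_eq_of_src_eq_singleton (hsrc : σ.src g = [s₁])
    (i : Fin (σ.src g).length) : (σ.src g).get i = s₁ :=
  List.eq_of_mem_singleton (by rw [← hsrc]; exact List.get_mem _ i)

namespace Tree

theorem ext {t u : σ.Tree s} (h : t.L = u.L) : t = u := by
  cases t; cases u; cases h; rfl

theorem isFinite_congr {t : σ.Tree s} {u : σ.Tree s'} (h : t.L = u.L) :
    t.IsFinite ↔ u.IsFinite := by
  rw [IsFinite, IsFinite, h]

def cast (h : s = s') (t : σ.Tree s) : σ.Tree s' := ⟨t.L, t.isLab, h ▸ t.root⟩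

@[simp] theorem cast_L (h : s = s') (t : σ.Tree s) : (t.cast h).L = t.L := rfl

theorem tgt_eq {t : σ.Tree s} (hg : t.L [] = some g) : σ.tgt g = s := by
  obtain ⟨g', hg', rfl⟩ := t.root
  rw [hg, Option.some_inj] at hg'
  rw [hg']

theorem isSome_L_singleton {t : σ.Tree s} (hg : t.L [] = some g) (i : ℕ) :
    (t.L [i]).isSome ↔ i < (σ.src g).length :=
  t.isLab.2.1 [] g hg i

theorem L_cons_eq_none {t : σ.Tree s} (hg : t.L [] = some g) {i : ℕ}
    (hi : (σ.src g).length ≤ i) (q : List ℕ) : t.L (i :: q) = none := by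
  have h : t.L [i] = none := by
    rw [← Option.not_isSome_iff_eq_none, isSome_L_singleton hg]; omega
  simpa using t.isLab.eq_none_append h q

def child (t : σ.Tree s) (hg : t.L [] = some g) (i : Fin (σ.src g).length) :
    σ.Tree ((σ.src g).get i) where
  L q := t.L (i.val :: q)
  isLab := ⟨fun p hp j => t.isLab.1 (i.val :: p) hp j,
    fun p g' hp j => t.isLab.2.1 (i.val :: p) g' hp j,
    fun p g' j g'' hp hpj => t.isLab.2.2 (i.val :: p) g' j g'' hp hpj⟩
  root := by
    obtain ⟨g', hg'⟩ := Option.isSome_iff_exists.mp ((isSome_L_singleton hg i).2 i.isLt)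
    refine ⟨g', hg', ?_⟩
    have := t.isLab.2.2 [] g i g' hg hg'
    rw [List.getElem?_eq_getElem i.isLt, Option.some_inj] at this
    exact this.symm

@[simp] theorem child_L (t : σ.Tree s) (hg : t.L [] = some g) (i : Fin (σ.src g).length)
    (q : List ℕ) : (t.child hg i).L q = t.L (i.val :: q) := rfl

theorem isFinite_child {t : σ.Tree s} (hg : t.L [] = some g) (i : Fin (σ.src g).length)
    (ht : t.IsFinite) : (t.child hg i).IsFinite :=
  ht.preimage List.cons_injective.injOn

theorem isFinite_of_forall_child {t : σ.Tree s} (hg : t.L [] = some g)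
    (h : ∀ i, (t.child hg i).IsFinite) : t.IsFinite := by
  refine ((Set.finite_singleton []).union
    (Set.finite_iUnion fun i => (h i).image (List.cons i.val))).subset ?_
  rintro (_ | ⟨j, q⟩) hp
  · exact Or.inl rfl
  · have hj : j < (σ.src g).length := by
      by_contra hj
      simp [L_cons_eq_none hg (not_lt.1 hj)] at hp
    exact Or.inr (Set.mem_iUnion.2 ⟨⟨j, hj⟩, q, hp, rfl⟩)

theorem exists_not_isFinite_child {t : σ.Tree s} (hg : t.L [] = some g) (ht : ¬ t.IsFinite) :
    ∃ i, ¬ (t.child hg i).IsFinite := by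
  by_contra! h
  exact ht (isFinite_of_forall_child hg h)

theorem not_isFinite_build {c : ∀ i : Fin (σ.src g).length, σ.Tree ((σ.src g).get i)}
    (i : Fin (σ.src g).length) (hi : ¬ (c i).IsFinite) : ¬ (σ.build g c).IsFinite :=
  fun hfin => hi <| (isFinite_congr (funext fun q => by simp [build_L_cons])).1
    (isFinite_child (build_L_nil g c) i hfin)

def onlyChild (t : σ.Tree s) (hg : t.L [] = some g) (hsrc : σ.src g = [s₁]) : σ.Tree s₁ :=
  (t.child hg ⟨0, by simp [hsrc]⟩).cast (get_eq_of_src_eq_singleton hsrc _)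

@[simp] theorem onlyChild_L (t : σ.Tree s) (hg : t.L [] = some g) (hsrc : σ.src g = [s₁])
    (q : List ℕ) : (t.onlyChild hg hsrc).L q = t.L (0 :: q) := rfl

theorem L_cons_eq_ite {t : σ.Tree s} (hg : t.L [] = some g) (hsrc : σ.src g = [s₁])
    (i : ℕ) (q : List ℕ) : t.L (i :: q) = if i = 0 then (t.onlyChild hg hsrc).L q else none := by
  split_ifs with hi
  · rw [hi, onlyChild_L]
  · exact L_cons_eq_none hg (by simp [hsrc]; omega) q

theorem not_isFinite_onlyChild {t : σ.Tree s} (hg : t.L [] = some g) (hsrc : σ.src g = [s₁])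
    (ht : ¬ t.IsFinite) : ¬ (t.onlyChild hg hsrc).IsFinite := fun hfin =>
  ht <| isFinite_of_forall_child hg fun i => by
    have hi : i.val = 0 := by simpa [hsrc] using i.isLt
    exact (isFinite_congr (funext fun q => by simp [hi])).2 hfin

end Tree

def buildUnary (hsrc : σ.src g = [s₁]) (t₁ : σ.Tree s₁) :
    σ.Tree (σ.tgt g) :=
  σ.build g fun i => t₁.cast (get_eq_of_src_eq_singleton hsrc i).symm

theorem buildUnary_L_cons (hsrc : σ.src g = [s₁]) (t₁ : σ.Tree s₁)
    (q : List ℕ) : (buildUnary hsrc t₁).L (0 :: q) = t₁.L q := by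
  simp [buildUnary, build_L_cons, hsrc]

theorem not_isFinite_buildUnary (hsrc : σ.src g = [s₁])
    {t₁ : σ.Tree s₁} (ht₁ : ¬ t₁.IsFinite) : ¬ (buildUnary hsrc t₁).IsFinite :=
  Tree.not_isFinite_build ⟨0, by simp [hsrc]⟩ ht₁

section Canonical

variable (pk : σ.Srt → σ.Gen)

def canonSort : σ.Srt → List ℕ → Option σ.Srt
  | s, [] => some s
  | s, i :: q => (σ.src (pk s))[i]?.bind fun s' => canonSort s' q

theorem canonSort_append_singleton (s : σ.Srt) (p : List ℕ) (i : ℕ) :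
    canonSort pk s (p ++ [i]) = (canonSort pk s p).bind fun s' => (σ.src (pk s'))[i]? := by
  induction p generalizing s with
  | nil => simp [canonSort]
  | cons j q ih => simp [canonSort, ih, Option.bind_assoc]

/-- Every node of sort `s'` is labelled `pk s'`; `canonSort pk s p` is the sort of the node at
position `p`. -/
def canonTree (hpk : ∀ s, σ.tgt (pk s) = s) (s : σ.Srt) : σ.Tree s where
  L p := (canonSort pk s p).map pk
  isLab := by
    refine ⟨fun p hp i => ?_, fun p g hp i => ?_, fun p g i g' hp hpi => ?_⟩
    · simp_all [canonSort_append_singleton]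
    · obtain ⟨s', hs', rfl⟩ := Option.map_eq_some_iff.1 hp
      simp [canonSort_append_singleton, hs']
    · obtain ⟨s', hs', rfl⟩ := Option.map_eq_some_iff.1 hp
      obtain ⟨s'', hs'', rfl⟩ : ∃ s'', (σ.src (pk s'))[i]? = some s'' ∧ pk s'' = g' := by
        simpa [canonSort_append_singleton, hs'] using hpi
      rw [hs'', hpk]
  root := ⟨pk s, rfl, hpk s⟩

end Canonical

theorem nonempty_tree (h : ∀ s, (σ.Gens s).Nonempty) (s : σ.Srt) : Nonempty (σ.Tree s) :=
  ⟨canonTree (fun s => (h s).some) (fun s => (h s).some_mem) s⟩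

theorem S1I_subset_compl_S0I : σ.S1I ⊆ σ.S0Iᶜ :=
  fun _ ⟨t, ht, _⟩ h0 => ht (h0 t)

def SoleInfiniteGen (s : σ.Srt) (g : σ.Gen) : Prop :=
  ∀ g' ∈ σ.Gens s, g' ≠ g → ∀ s' ∈ σ.src g', s' ∈ σ.S0I

theorem SoleInfiniteGen.root_eq (h : σ.SoleInfiniteGen s g) {t : σ.Tree s}
    (ht : ¬ t.IsFinite) : t.L [] = some g := by
  obtain ⟨g', hg', rfl⟩ := t.root
  by_contra hne
  exact ht <| Tree.isFinite_of_forall_child hg' fun i =>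
    h g' rfl (fun e => hne (e ▸ hg')) _ (List.get_mem _ i) _

theorem SoleInfiniteGen.eq_of_src_eq_singleton (h : σ.SoleInfiniteGen s g) {g' : σ.Gen}
    (hg' : g' ∈ σ.Gens s) (hsrc : σ.src g' = [s₁]) (hs₁ : s₁ ∉ σ.S0I) : g' = g :=
  by_contra fun hne => hs₁ (h g' hg' hne s₁ (by simp [hsrc]))

theorem mem_fOne {X : Set σ.Srt} : s ∈ fOne σ X ↔
    s ∈ X ∧ ∃ g ∈ σ.Gens s, ∃ s₁, σ.src g = [s₁] ∧ s₁ ∈ X ∧ σ.SoleInfiniteGen s g :=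
  Iff.rfl

theorem monotone_fOne : Monotone (fOne σ) :=
  fun _ _ hXY _ ⟨hs, g, hg, s₁, hsrc, hs₁, hsole⟩ => ⟨hXY hs, g, hg, s₁, hsrc, hXY hs₁, hsole⟩

theorem fOne_subset_self (X : Set σ.Srt) : fOne σ X ⊆ X := fun _ hs => hs.1

theorem Tree.L_eq_of_subset_fOne {X : Set σ.Srt} (hX : X ⊆ fOne σ X) (p : List ℕ) :
    ∀ {s}, s ∈ X → ∀ {t u : σ.Tree s}, ¬ t.IsFinite → ¬ u.IsFinite → t.L p = u.L p := by
  induction p with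
  | nil =>
    intro s hs t u ht hu
    obtain ⟨-, g, -, -, -, -, hsole⟩ := mem_fOne.1 (hX hs)
    rw [hsole.root_eq ht, hsole.root_eq hu]
  | cons i q ih =>
    intro s hs t u ht hu
    obtain ⟨-, g, -, s₁, hsrc, hs₁, hsole⟩ := mem_fOne.1 (hX hs)
    have hgt := hsole.root_eq ht
    have hgu := hsole.root_eq hu
    rw [L_cons_eq_ite hgt hsrc, L_cons_eq_ite hgu hsrc,
      ih hs₁ (not_isFinite_onlyChild hgt hsrc ht) (not_isFinite_onlyChild hgu hsrc hu)]

theorem subset_S1I_of_subset_fOne {X : Set σ.Srt} (hX0 : X ⊆ σ.S0Iᶜ) (hX : X ⊆ fOne σ X) :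
    X ⊆ σ.S1I := by
  intro s hs
  obtain ⟨t, ht⟩ : ∃ t : σ.Tree s, ¬ t.IsFinite := by simpa [S0I] using hX0 hs
  exact ⟨t, ht, fun u hu => Tree.ext (funext fun p => Tree.L_eq_of_subset_fOne hX p hs hu ht)⟩

theorem iInter_fOne_subset {ι : Sort*} [Nonempty ι] {X : ι → Set σ.Srt}
    (hX : ∀ i, X i ⊆ σ.S0Iᶜ) : ⋂ i, fOne σ (X i) ⊆ fOne σ (⋂ i, X i) := by
  intro s hs
  rw [Set.mem_iInter] at hs
  obtain ⟨-, g, hg, s₁, hsrc, -, hsole⟩ := mem_fOne.1 (hs (Classical.arbitrary ι))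
  refine ⟨Set.mem_iInter.2 fun i => (hs i).1, g, hg, s₁, hsrc, Set.mem_iInter.2 fun i => ?_, hsole⟩
  obtain ⟨-, g', hg', s₁', hsrc', hs₁', -⟩ := hs i
  obtain rfl := hsole.eq_of_src_eq_singleton hg' hsrc' (hX i hs₁')
  rwa [List.singleton_inj.1 (hsrc.symm.trans hsrc')]

theorem eq_onlyChild_of_unique {u : σ.Tree s} (hu : ∀ t : σ.Tree s, ¬ t.IsFinite → t = u)
    (hg : u.L [] = some g) (hsrc : σ.src g = [s₁]) {t₁ : σ.Tree s₁} (ht₁ : ¬ t₁.IsFinite) :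
    t₁ = u.onlyChild hg hsrc := by
  have hv := hu ((buildUnary hsrc t₁).cast (Tree.tgt_eq hg)) (not_isFinite_buildUnary hsrc ht₁)
  exact Tree.ext (funext fun q => by rw [Tree.onlyChild_L, ← hv, Tree.cast_L, buildUnary_L_cons])

theorem Tree.L_eq_of_soleInfiniteGen (hsole : σ.SoleInfiniteGen s g) (hsrc : σ.src g = [s₁])
    (hs₁ : s₁ ∈ σ.S1I) {t : σ.Tree s} {t₁ : σ.Tree s₁} (ht : ¬ t.IsFinite)
    (ht₁ : ¬ t₁.IsFinite) :
    t.L [] = some g ∧ ∀ i q, t.L (i :: q) = if i = 0 then t₁.L q else none := by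
  have hg := hsole.root_eq ht
  refine ⟨hg, fun i q => ?_⟩
  rw [L_cons_eq_ite hg hsrc, hs₁.unique (not_isFinite_onlyChild hg hsrc ht) ht₁]

section Nonempty

variable [∀ s, Nonempty (σ.Tree s)]

theorem exists_L_nil_eq (hg : g ∈ σ.Gens s) : ∃ t : σ.Tree s, t.L [] = some g :=
  ⟨(σ.build g fun _ => Classical.arbitrary _).cast hg, rfl⟩

theorem exists_not_isFinite_of_mem_src (hs' : s' ∈ σ.src g) (h : s' ∉ σ.S0I) :
    ∃ t : σ.Tree (σ.tgt g), t.L [] = some g ∧ ¬ t.IsFinite := by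
  obtain ⟨t', ht'⟩ : ∃ t' : σ.Tree s', ¬ t'.IsFinite := by simpa [S0I] using h
  obtain ⟨i, rfl⟩ := List.mem_iff_get.1 hs'
  exact ⟨σ.build g (Function.update (fun _ => Classical.arbitrary _) i t'), rfl,
    Tree.not_isFinite_build i (by simpa using ht')⟩

theorem exists_not_isFinite_graft {t : σ.Tree s} (hg : t.L [] = some g)
    {i j : Fin (σ.src g).length} (hi : ¬ (t.child hg i).IsFinite) (hji : j ≠ i)
    (w : σ.Tree ((σ.src g).get j)) : ∃ v : σ.Tree s, ¬ v.IsFinite ∧ v.L [j.val] = w.L [] := by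
  let c : ∀ k, σ.Tree ((σ.src g).get k) :=
    Function.update (Function.update (fun _ => Classical.arbitrary _) i (t.child hg i)) j w
  refine ⟨(σ.build g c).cast (Tree.tgt_eq hg), Tree.not_isFinite_build i ?_, ?_⟩
  · simpa [c, Function.update_of_ne hji.symm] using hi
  · simp [c, build_L_cons]

theorem soleInfiniteGen_of_unique {u : σ.Tree s} (hu : ∀ t : σ.Tree s, ¬ t.IsFinite → t = u)
    (hg : u.L [] = some g) : σ.SoleInfiniteGen s g := by
  rintro g' rfl hne s' hs'
  by_contra h
  obtain ⟨t, ht, hinf⟩ := exists_not_isFinite_of_mem_src hs' h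
  rw [hu t hinf, hg, Option.some_inj] at ht
  exact hne ht.symm

theorem length_src_eq_one (htwo : ∀ s, (σ.Gens s).Nontrivial) {u : σ.Tree s}
    (hinf : ¬ u.IsFinite) (hu : ∀ t : σ.Tree s, ¬ t.IsFinite → t = u) (hg : u.L [] = some g) :
    (σ.src g).length = 1 := by
  obtain ⟨i, hi⟩ := u.exists_not_isFinite_child hg hinf
  by_contra hlen
  have : Nontrivial (Fin (σ.src g).length) :=
    Fin.nontrivial_iff_two_le.2 (by have := i.isLt; omega)
  obtain ⟨j, hji⟩ := exists_ne i
  obtain ⟨g₁, hg₁, g₂, hg₂, hne⟩ := htwo ((σ.src g).get j)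
  obtain ⟨w₁, hw₁⟩ := exists_L_nil_eq hg₁
  obtain ⟨w₂, hw₂⟩ := exists_L_nil_eq hg₂
  obtain ⟨v₁, hv₁, hv₁j⟩ := exists_not_isFinite_graft hg hi hji w₁
  obtain ⟨v₂, hv₂, hv₂j⟩ := exists_not_isFinite_graft hg hi hji w₂
  rw [hu v₁ hv₁, hw₁] at hv₁j
  rw [hu v₂ hv₂, hw₂, hv₁j, Option.some_inj] at hv₂j
  exact hne hv₂j

end Nonempty

theorem S1I_subset_fOne (htwo : ∀ s, (σ.Gens s).Nontrivial) : σ.S1I ⊆ fOne σ σ.S1I := by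
  have := nonempty_tree fun s => (htwo s).nonempty
  intro s hs
  obtain ⟨u, hinf, hu⟩ := hs
  obtain ⟨g, hg, hgs⟩ := u.root
  obtain ⟨s₁, hsrc⟩ := List.length_eq_one_iff.1 (length_src_eq_one htwo hinf hu hg)
  exact ⟨⟨u, hinf, hu⟩, g, hgs, s₁, hsrc,
    ⟨u.onlyChild hg hsrc, Tree.not_isFinite_onlyChild hg hsrc hinf,
      fun t₁ ht₁ => eq_onlyChild_of_unique hu hg hsrc ht₁⟩,
    soleInfiniteGen_of_unique hu hg⟩

end Sig

/-- Assuming every sort has at least two generators, `S_1I`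
(the sorts with exactly one infinite tree) is the greatest fixed point of `f` on
`P(S \ S_0I)`, obtained as the intersection of the finite iterations of `f` on
`S \ S_0I`; moreover, for each `s ∈ S_1I` the unique infinite tree of sort `s` is
`g(u_{s₁})` where `g : s₁ → s` is the unique unary generator of `s` with `s₁ ∈ S_1I`
and `u_{s₁}` is the unique infinite tree of sort `s₁`. -/
theorem S1I_gfp (σ : Sig) (htwo : ∀ s : σ.Srt, (σ.Gens s).Nontrivial) :
    Monotone (fOne σ) ∧
    fOne σ (Sig.S1I σ) = Sig.S1I σ ∧
    (∀ X : Set σ.Srt, X ⊆ (Sig.S0I σ)ᶜ → fOne σ X = X → X ⊆ Sig.S1I σ) ∧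
    Sig.S1I σ = ⋂ d : ℕ, (fOne σ)^[d + 1] (Sig.S0I σ)ᶜ ∧
    ∀ s ∈ Sig.S1I σ, ∃ g ∈ σ.Gens s, ∃ s₁ : σ.Srt, σ.src g = [s₁] ∧ s₁ ∈ Sig.S1I σ ∧
      (∀ g' ∈ σ.Gens s, (∃ s₁' : σ.Srt, σ.src g' = [s₁'] ∧ s₁' ∈ Sig.S1I σ) → g' = g) ∧
      ∀ (t : σ.Tree s) (t₁ : σ.Tree s₁), ¬ t.IsFinite → ¬ t₁.IsFinite →
        (t.L [] = some g ∧ ∀ (i : ℕ) (q : List ℕ),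
          t.L (i :: q) = if i = 0 then t₁.L q else none) := by
  have hfix : fOne σ σ.S1I = σ.S1I :=
    (Sig.fOne_subset_self _).antisymm (Sig.S1I_subset_fOne htwo)
  have hiter (n : ℕ) (X : Set σ.Srt) : (fOne σ)^[n] X ⊆ X :=
    Function.iterate_le_id_of_le_id Sig.fOne_subset_self n X
  refine ⟨Sig.monotone_fOne, hfix,
    fun X hX0 hX => Sig.subset_S1I_of_subset_fOne hX0 hX.symm.subset, ?_, ?_⟩
  · refine (Set.subset_iInter fun d => ?_).antisymm (Sig.subset_S1I_of_subset_fOne ?_ ?_)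
    · rw [← Function.iterate_fixed hfix (d + 1)]
      exact Sig.monotone_fOne.iterate _ Sig.S1I_subset_compl_S0I
    · exact (Set.iInter_subset _ 0).trans (hiter 1 _)
    · calc ⋂ d : ℕ, (fOne σ)^[d + 1] σ.S0Iᶜ
          ⊆ ⋂ d : ℕ, fOne σ ((fOne σ)^[d + 1] σ.S0Iᶜ) := Set.subset_iInter fun d => by
            rw [← Function.iterate_succ_apply' (fOne σ) (d + 1)]
            exact Set.iInter_subset _ (d + 1)
        _ ⊆ _ := Sig.iInter_fOne_subset fun d => hiter _ _
  · intro s hs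
    obtain ⟨-, g, hg, s₁, hsrc, hs₁, hsole⟩ := Sig.mem_fOne.1 (Sig.S1I_subset_fOne htwo hs)
    exact ⟨g, hg, s₁, hsrc, hs₁,
      fun g' hg' ⟨_, hsrc', hs₁'⟩ =>
        hsole.eq_of_src_eq_singleton hg' hsrc' (Sig.S1I_subset_compl_S0I hs₁'),
      fun t t₁ ht ht₁ => Sig.Tree.L_eq_of_soleInfiniteGen hsole hsrc hs₁ ht ht₁⟩
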